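/- arXiv:1606.04479 — 2 statements merged into one kernel-verified Lean document; each statement's English description precedes it below -/
import Mathlib

section
/- Fix β > 0. The single-particle mean m(λ) satisfies λ·( m(λ) − √(β/λ) ) → 3/4 as λ → +∞; equivalently, m(λ) = √(β/λ) + 3/(4λ) + o(1/λ) as λ → ∞. -/
open MeasureTheory Filter

noncomputable section

/-- Normalizing constant `c(λ) = ∫₀¹ e^{−λx − β/x} dx`. -/
def cpart (β l : ℝ) : ℝ := ∫ x in (0:ℝ)..1, Real.exp (-(l * x) - β / x)

/-- Single-particle mean `m(λ)`. -/
def mpart (β l : ℝ) : ℝ :=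
  (∫ x in (0:ℝ)..1, x * Real.exp (-(l * x) - β / x)) / cpart β l

/-- Single-particle variance `v(λ)`. -/
def vpart (β l : ℝ) : ℝ :=
  (∫ x in (0:ℝ)..1, x ^ 2 * Real.exp (-(l * x) - β / x)) / cpart β l - mpart β l ^ 2

/-!
Put `λ = t⁴/β` and `x = (β/t²)(1 + s/t)`, so that `√(β/λ) = β/t²` corresponds to `s = 0` and
`λx + β/x = 2t² + s²t/(t+s)`. After cancelling `e^{-2t²}`, both `c(λ)` and the first moment
about `β/t²` become integrals against `e^{-s²t/(t+s)}` over `s ∈ [-t, t³/β - t]`, and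
`λ (m(λ) - √(β/λ)) = t ∫ s e^{-s²t/(t+s)} ds / ∫ e^{-s²t/(t+s)} ds`.
By dominated convergence the denominator tends to `∫ e^{-s²} = √π`. In the numerator the part
`∫ s e^{-s²}` is `O(e^{-t²})`, while
`t s (e^{-s²t/(t+s)} - e^{-s²}) = s e^{-s²} t (e^{s³/(t+s)} - 1)` tends to `s⁴ e^{-s²}`,
again under a dominating function `2 (1 + s⁴) e^{1-|s|}`; and `∫ s⁴ e^{-s²} = (3/4)√π`.
-/

open Set Real Topology

theorem tendsto_intervalIntegral_of_dominated_of_tendsto_atBot_atTop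
    {E ι : Type*} [NormedAddCommGroup E] [NormedSpace ℝ E] {l : Filter ι} [l.IsCountablyGenerated]
    {μ : Measure ℝ} {F : ι → ℝ → E} {f : ℝ → E} {bound : ℝ → ℝ} {a b : ι → ℝ}
    (ha : Tendsto a l atBot) (hb : Tendsto b l atTop)
    (hF_meas : ∀ᶠ i in l, AEStronglyMeasurable (F i) μ)
    (h_bound : ∀ᶠ i in l, ∀ x ∈ Ioc (a i) (b i), ‖F i x‖ ≤ bound x)
    (bound_integrable : Integrable bound μ)
    (h_lim : ∀ᵐ x ∂μ, Tendsto (fun i => F i x) l (𝓝 (f x))) :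
    Tendsto (fun i => ∫ x in a i..b i, F i x ∂μ) l (𝓝 (∫ x, f x ∂μ)) := by
  have h_mem (x : ℝ) : ∀ᶠ i in l, x ∈ Ioc (a i) (b i) :=
    (ha.eventually (eventually_lt_atBot x)).and (hb.eventually (eventually_ge_atTop x))
  have h_le : ∀ᶠ i in l, a i ≤ b i :=
    (ha.eventually (eventually_le_atBot 0)).mp
      ((hb.eventually (eventually_ge_atTop 0)).mono fun _ hb ha => ha.trans hb)
  have h_ind := tendsto_integral_filter_of_dominated_convergence (fun x => ‖bound x‖)
    (F := fun i => (Ioc (a i) (b i)).indicator (F i)) (f := f)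
    (hF_meas.mono fun i hi => hi.indicator measurableSet_Ioc)
    (h_bound.mono fun i hi => Eventually.of_forall fun x => by
      by_cases hx : x ∈ Ioc (a i) (b i)
      · simpa [indicator_of_mem hx] using (hi x hx).trans (le_abs_self _)
      · simp [indicator_of_notMem hx])
    bound_integrable.norm
    (h_lim.mono fun x hx => hx.congr' ((h_mem x).mono fun i hi => (indicator_of_mem hi _).symm))
  refine h_ind.congr' (h_le.mono fun i hi => ?_)
  dsimp only
  rw [intervalIntegral.integral_of_le hi, integral_indicator measurableSet_Ioc]

theorem MeasureTheory.IntegrableOn.integrable_comp_abs {f : ℝ → ℝ} (hf : IntegrableOn f (Ioi 0)) :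
    Integrable fun x => f |x| := by
  have h := (integrable_indicator_iff measurableSet_Ioi).2 hf
  refine (h.add h.comp_neg).congr ?_
  filter_upwards [Measure.ae_ne volume 0] with x hx
  rcases hx.lt_or_gt with hx | hx
  · simp [hx, hx.not_gt, abs_of_neg hx]
  · simp [hx, hx.not_gt, abs_of_pos hx]

theorem abs_exp_sub_exp_le (a b : ℝ) : |exp a - exp b| ≤ |a - b| * max (exp a) (exp b) := by
  wlog hab : b ≤ a generalizing a b
  · rw [abs_sub_comm, abs_sub_comm a, max_comm]; exact this b a (le_of_not_ge hab)
  have h := add_one_le_exp (b - a)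
  rw [abs_of_nonneg (sub_nonneg.2 (exp_le_exp.2 hab)), abs_of_nonneg (sub_nonneg.2 hab),
    max_eq_left (exp_le_exp.2 hab)]
  have : exp b = exp a * exp (b - a) := by rw [← exp_add]; ring_nf
  nlinarith [exp_pos a]

theorem tendsto_mul_exp_sub_one {α : Type*} {l : Filter α} {f g : α → ℝ} {c : ℝ}
    (hf : Tendsto f l (𝓝 0)) (hgf : Tendsto (fun i => g i * f i) l (𝓝 c)) :
    Tendsto (fun i => g i * (exp (f i) - 1)) l (𝓝 c) := by
  have h_rem : Tendsto (fun i => g i * (exp (f i) - 1 - f i)) l (𝓝 0) := by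
    have h_prod : Tendsto (fun i => |g i * f i| * |f i|) l (𝓝 0) := by
      simpa using hgf.abs.mul hf.abs
    refine squeeze_zero_norm' ?_ h_prod
    filter_upwards [hf.eventually (Metric.closedBall_mem_nhds 0 one_pos)] with i hi
    have hi : |f i| ≤ 1 := by simpa using hi
    calc ‖g i * (exp (f i) - 1 - f i)‖ ≤ |g i| * f i ^ 2 := by
          rw [norm_mul, norm_eq_abs]
          exact mul_le_mul_of_nonneg_left (abs_exp_sub_one_sub_id_le hi) (abs_nonneg _)
      _ = |g i * f i| * |f i| := by rw [abs_mul, mul_assoc, abs_mul_abs_self, sq]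
  simpa [mul_sub, sub_add_cancel] using hgf.add h_rem

theorem tendsto_div_add_atTop (c s : ℝ) : Tendsto (fun t : ℝ => c / (t + s)) atTop (𝓝 0) :=
  tendsto_const_nhds.div_atTop (tendsto_atTop_add_const_right _ s tendsto_id)

theorem tendsto_mul_exp_neg_sq : Tendsto (fun t : ℝ => t * exp (-t ^ 2)) atTop (𝓝 0) := by
  refine squeeze_zero' ?_ ?_ (by simpa using tendsto_pow_mul_exp_neg_atTop_nhds_zero 1)
  · filter_upwards [eventually_ge_atTop 0] with t ht
    positivity
  · filter_upwards [eventually_ge_atTop 1] with t ht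
    exact mul_le_mul_of_nonneg_left (exp_le_exp.2 (by nlinarith)) (by linarith)

theorem tendsto_mul_exp_neg_sq_sub {b : ℝ → ℝ} (hb : ∀ᶠ t in atTop, t ≤ b t) :
    Tendsto (fun t => t * (exp (-t ^ 2) - exp (-b t ^ 2))) atTop (𝓝 0) := by
  refine squeeze_zero_norm' ?_ tendsto_mul_exp_neg_sq
  filter_upwards [hb, eventually_ge_atTop 0] with t hbt ht
  rw [norm_mul, norm_of_nonneg ht]
  refine mul_le_mul_of_nonneg_left ?_ ht
  rw [norm_eq_abs, abs_of_nonneg (sub_nonneg.2 (exp_le_exp.2 (by nlinarith)))]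
  linarith [exp_pos (-b t ^ 2)]

theorem integral_mul_exp_neg_sq (a b : ℝ) :
    ∫ s in a..b, s * exp (-s ^ 2) = (exp (-a ^ 2) - exp (-b ^ 2)) / 2 := by
  have h (x : ℝ) : HasDerivAt (fun s => -exp (-s ^ 2) / 2) (x * exp (-x ^ 2)) x := by
    have h_sq : HasDerivAt (fun s : ℝ => -s ^ 2) (-(2 * x)) x := by
      simpa using (hasDerivAt_pow 2 x).fun_neg
    rw [show x * exp (-x ^ 2) = -(exp (-x ^ 2) * -(2 * x)) / 2 by ring]
    exact h_sq.exp.fun_neg.div_const 2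
  rw [intervalIntegral.integral_eq_sub_of_hasDerivAt (fun x _ => h x)
    ((by fun_prop : Continuous fun s : ℝ => s * exp (-s ^ 2)).intervalIntegrable _ _)]
  ring

theorem integral_pow_four_mul_exp_neg_sq : ∫ s : ℝ, s ^ 4 * exp (-s ^ 2) = 3 / 4 * √π := by
  have h := integral_comp_abs (f := fun x => x ^ (4 : ℝ) * exp (-x ^ (2 : ℝ)))
  rw [integral_rpow_mul_exp_neg_rpow two_pos (by norm_num),
    show ((4 : ℝ) + 1) / 2 = (2 : ℕ) + 1 / 2 by norm_num, Gamma_nat_add_half] at h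
  norm_num [(by decide : Even 4).pow_abs] at h
  rw [h]
  norm_num
  ring

theorem integrable_one_add_pow_four_mul_exp_one_sub_abs :
    Integrable fun s : ℝ => (1 + s ^ 4) * exp (1 - |s|) := by
  suffices IntegrableOn (fun x : ℝ => (1 + x ^ 4) * exp (1 - x)) (Ioi 0) by
    simpa only [(by decide : Even 4).pow_abs] using this.integrable_comp_abs
  have h0 := (Real.GammaIntegral_convergent (s := 1) one_pos).const_mul (exp 1)
  have h4 := (Real.GammaIntegral_convergent (s := 5) (by norm_num)).const_mul (exp 1)
  refine IntegrableOn.congr_fun (h0.add h4) (fun x _ => ?_) measurableSet_Ioi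
  norm_num [sub_eq_add_neg, exp_add]
  ring

theorem exp_neg_sq_le_exp_one_sub_abs (s : ℝ) : exp (-s ^ 2) ≤ exp (1 - |s|) :=
  exp_le_exp.2 (by nlinarith [sq_abs s, sq_nonneg (|s| - 1)])

def rescaledDensity (t s : ℝ) : ℝ := exp (-(s ^ 2 * t / (t + s)))

def rescaledUpper (β t : ℝ) : ℝ := t ^ 3 / β - t

def rescaledMass (β t : ℝ) : ℝ := ∫ s in -t..rescaledUpper β t, rescaledDensity t s

def rescaledMoment (β t : ℝ) : ℝ := ∫ s in -t..rescaledUpper β t, s * rescaledDensity t s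

section Rescaled

variable {β t s : ℝ}

theorem rescaledDensity_pos (t s : ℝ) : 0 < rescaledDensity t s := exp_pos _

theorem measurable_rescaledDensity (t : ℝ) : Measurable (rescaledDensity t) := by
  unfold rescaledDensity
  fun_prop

theorem rescaledDensity_le_one (ht : 0 ≤ t) (hts : 0 ≤ t + s) : rescaledDensity t s ≤ 1 :=
  exp_le_one_iff.2 (neg_nonpos.2 (by positivity))

theorem neg_le_rescaledUpper (hβ : 0 < β) (ht : 0 ≤ t) : -t ≤ rescaledUpper β t := by
  have : 0 ≤ t ^ 3 / β := by positivity
  simp only [rescaledUpper]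
  linarith

theorem intervalIntegrable_rescaledDensity (ht : 0 ≤ t) {b : ℝ} (hb : -t ≤ b) :
    IntervalIntegrable (rescaledDensity t) volume (-t) b := by
  refine (intervalIntegrable_const (c := (1 : ℝ))).mono_fun'
    (measurable_rescaledDensity t).aestronglyMeasurable ?_
  refine (ae_restrict_iff' measurableSet_uIoc).2 (Eventually.of_forall fun s hs => ?_)
  rw [uIoc_of_le hb] at hs
  dsimp only
  rw [norm_of_nonneg (rescaledDensity_pos t s).le]
  exact rescaledDensity_le_one ht (by linarith [hs.1])

theorem exponent_rescale (hβ : β ≠ 0) (ht : t ≠ 0) (hts : t + s ≠ 0) :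
    -(t ^ 4 / β * (β / t ^ 3 * s + β / t ^ 2)) - β / (β / t ^ 3 * s + β / t ^ 2)
      = -(2 * t ^ 2) - s ^ 2 * t / (t + s) := by
  rw [show β / t ^ 3 * s + β / t ^ 2 = β * (t + s) / t ^ 3 by field_simp; ring]
  field_simp
  ring

theorem integral_mul_exp_rescale (hβ : 0 < β) (ht : 0 < t) (g : ℝ → ℝ) :
    ∫ x in (0 : ℝ)..1, g x * exp (-(t ^ 4 / β * x) - β / x)
      = β / t ^ 3 * exp (-(2 * t ^ 2)) *
        ∫ s in -t..rescaledUpper β t, g (β / t ^ 3 * s + β / t ^ 2) * rescaledDensity t s := by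
  have hc : β / t ^ 3 ≠ 0 := by positivity
  have h := intervalIntegral.integral_comp_mul_add (a := -t) (b := rescaledUpper β t)
    (fun x : ℝ => g x * exp (-(t ^ 4 / β * x) - β / x)) hc (β / t ^ 2)
  rw [show β / t ^ 3 * -t + β / t ^ 2 = 0 by field_simp; ring,
    show β / t ^ 3 * rescaledUpper β t + β / t ^ 2 = 1 by
      simp only [rescaledUpper]; field_simp; ring,
    smul_eq_mul, eq_inv_mul_iff_mul_eq₀ hc] at h
  rw [← h, mul_assoc, ← intervalIntegral.integral_const_mul (exp (-(2 * t ^ 2)))]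
  congr 1
  refine intervalIntegral.integral_congr_ae (Eventually.of_forall fun s hs => ?_)
  rw [uIoc_of_le (neg_le_rescaledUpper hβ ht.le)] at hs
  rw [exponent_rescale hβ.ne' ht.ne' (by linarith [hs.1]), sub_eq_add_neg, exp_add,
    rescaledDensity]
  ring

theorem mpart_rescale (hβ : 0 < β) (ht : 0 < t) (hmass : rescaledMass β t ≠ 0) :
    t ^ 4 / β * (mpart β (t ^ 4 / β) - β / t ^ 2) = t * rescaledMoment β t / rescaledMass β t := by
  have hc := integral_mul_exp_rescale hβ ht fun _ => 1
  have hm := integral_mul_exp_rescale hβ ht id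
  simp only [one_mul, id] at hc hm
  have hint := intervalIntegrable_rescaledDensity ht.le (neg_le_rescaledUpper hβ ht.le)
  have hsplit : ∫ s in -t..rescaledUpper β t, (β / t ^ 3 * s + β / t ^ 2) * rescaledDensity t s
      = β / t ^ 3 * rescaledMoment β t + β / t ^ 2 * rescaledMass β t := by
    simp only [add_mul, mul_assoc]
    rw [intervalIntegral.integral_add
      ((hint.continuousOn_mul (g := fun s => s) continuousOn_id).const_mul _) (hint.const_mul _),
      intervalIntegral.integral_const_mul, intervalIntegral.integral_const_mul]
    rfl
  rw [mpart, cpart, hc, hm, hsplit, ← rescaledMass]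
  field_simp
  ring

theorem rescaledDensity_eq (hts : t + s ≠ 0) :
    rescaledDensity t s = exp (-s ^ 2 + s ^ 3 / (t + s)) := by
  rw [rescaledDensity]
  congr 1
  field_simp
  ring

theorem rescaledDensity_le_exp_one_sub_abs (ht : 1 ≤ t) (hts : 0 < t + s) :
    rescaledDensity t s ≤ exp (1 - |s|) := by
  suffices |s| - 1 ≤ s ^ 2 * t / (t + s) from exp_le_exp.2 (by linarith)
  rw [le_div_iff₀ hts]
  rcases le_or_gt 0 s with hs | hs
  · rw [abs_of_nonneg hs]
    nlinarith [mul_nonneg (sub_nonneg.2 ht) (sq_nonneg (s - 1 / 2))]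
  · rw [abs_of_neg hs]
    nlinarith [mul_nonneg (sub_nonneg.2 ht) (sq_nonneg s), sq_nonneg (s + 1 / 2)]

theorem abs_mul_rescaledDensity_sub_le (ht : 1 ≤ t) (hts : 0 < t + s) :
    |t * (s * (rescaledDensity t s - exp (-s ^ 2)))| ≤ 2 * ((1 + s ^ 4) * exp (1 - |s|)) := by
  set M := exp (1 - |s|)
  have hM : 0 ≤ M := (exp_pos _).le
  have hD := rescaledDensity_le_exp_one_sub_abs ht hts
  have hG := exp_neg_sq_le_exp_one_sub_abs s
  have h_near : |rescaledDensity t s - exp (-s ^ 2)| ≤ |s| ^ 3 / (t + s) * M := by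
    have h := abs_exp_sub_exp_le (-s ^ 2 + s ^ 3 / (t + s)) (-s ^ 2)
    rw [← rescaledDensity_eq hts.ne', add_sub_cancel_left, abs_div, abs_pow,
      abs_of_pos hts] at h
    exact h.trans (mul_le_mul_of_nonneg_left (max_le hD hG) (by positivity))
  have h_far : |rescaledDensity t s - exp (-s ^ 2)| ≤ M :=
    abs_sub_le_of_nonneg_of_le (rescaledDensity_pos t s).le hD (exp_pos _).le hG
  rw [abs_mul, abs_mul, abs_of_pos (by linarith : 0 < t)]
  -- `t / (t + s)` is unbounded as `s → -t`; there only the crude bound `M` is used.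
  rcases le_or_gt (-(t / 2)) s with hs | hs
  · calc t * (|s| * |rescaledDensity t s - exp (-s ^ 2)|)
        ≤ t * (|s| * (|s| ^ 3 / (t + s) * M)) := by gcongr
      _ = t / (t + s) * s ^ 4 * M := by
        rw [show s ^ 4 = |s| ^ 4 by rw [← abs_pow, abs_of_nonneg (by positivity)]]
        ring
      _ ≤ 2 * s ^ 4 * M := by
        gcongr
        rw [div_le_iff₀ hts]
        linarith
      _ ≤ 2 * ((1 + s ^ 4) * M) := by nlinarith
  · calc t * (|s| * |rescaledDensity t s - exp (-s ^ 2)|)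
        ≤ t * (|s| * M) := by gcongr
      _ ≤ 2 * s ^ 2 * M := by
        rw [abs_of_neg (by linarith : s < 0)]
        nlinarith [mul_nonneg hM (by linarith : 0 ≤ -s)]
      _ ≤ 2 * ((1 + s ^ 4) * M) := by nlinarith [sq_nonneg (s ^ 2 - 1)]

theorem eventually_rescaledDensity_eq (s : ℝ) :
    ∀ᶠ t in atTop, rescaledDensity t s = exp (-s ^ 2 + s ^ 3 / (t + s)) := by
  filter_upwards [eventually_gt_atTop (-s)] with t ht
  exact rescaledDensity_eq (by linarith)

theorem tendsto_rescaledDensity (s : ℝ) :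
    Tendsto (fun t => rescaledDensity t s) atTop (𝓝 (exp (-s ^ 2))) := by
  have h := (continuous_exp.tendsto _).comp
    ((tendsto_div_add_atTop (s ^ 3) s).const_add (-s ^ 2))
  rw [add_zero] at h
  exact h.congr' (EventuallyEq.symm (eventually_rescaledDensity_eq s))

theorem tendsto_mul_mul_rescaledDensity_sub (s : ℝ) :
    Tendsto (fun t => t * (s * (rescaledDensity t s - exp (-s ^ 2)))) atTop
      (𝓝 (s ^ 4 * exp (-s ^ 2))) := by
  have hw := tendsto_div_add_atTop (s ^ 3) s
  have htw : Tendsto (fun t => t * (s ^ 3 / (t + s))) atTop (𝓝 (s ^ 3)) := by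
    have h := (hw.const_mul s).const_sub (s ^ 3)
    rw [mul_zero, sub_zero] at h
    refine h.congr' ?_
    filter_upwards [eventually_gt_atTop (-s)] with t ht
    field_simp [show t + s ≠ 0 by linarith]
    ring
  have h := (tendsto_mul_exp_sub_one hw htw).const_mul (s * exp (-s ^ 2))
  rw [show s * exp (-s ^ 2) * s ^ 3 = s ^ 4 * exp (-s ^ 2) by ring] at h
  refine h.congr' ?_
  filter_upwards [eventually_rescaledDensity_eq s] with t ht
  rw [ht, exp_add]
  ring

theorem eventually_le_rescaledUpper (hβ : 0 < β) : ∀ᶠ t in atTop, t ≤ rescaledUpper β t := by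
  filter_upwards [eventually_ge_atTop 0,
    (tendsto_pow_atTop two_ne_zero).eventually_ge_atTop (2 * β)] with t ht ht2
  rw [rescaledUpper, le_sub_iff_add_le, le_div_iff₀ hβ]
  nlinarith

theorem tendsto_rescaledUpper (hβ : 0 < β) : Tendsto (rescaledUpper β) atTop atTop :=
  tendsto_atTop_mono' atTop (eventually_le_rescaledUpper hβ) tendsto_id

theorem tendsto_rescaledMass (hβ : 0 < β) : Tendsto (rescaledMass β) atTop (𝓝 √π) := by
  have h := tendsto_intervalIntegral_of_dominated_of_tendsto_atBot_atTop
    (F := fun t s => rescaledDensity t s) (μ := volume)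
    tendsto_neg_atTop_atBot (tendsto_rescaledUpper hβ)
    (Eventually.of_forall fun t => (measurable_rescaledDensity t).aestronglyMeasurable)
    ((eventually_ge_atTop 1).mono fun t ht s hs => ?_)
    integrable_one_add_pow_four_mul_exp_one_sub_abs
    (Eventually.of_forall tendsto_rescaledDensity)
  · rwa [show ∫ s : ℝ, exp (-s ^ 2) = √π by simpa using integral_gaussian 1] at h
  · rw [norm_of_nonneg (rescaledDensity_pos t s).le]
    refine (rescaledDensity_le_exp_one_sub_abs ht (by linarith [hs.1])).trans ?_
    exact le_mul_of_one_le_left (exp_pos _).le (by nlinarith [sq_nonneg (s ^ 2)])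

theorem tendsto_mul_rescaledMoment (hβ : 0 < β) :
    Tendsto (fun t => t * rescaledMoment β t) atTop (𝓝 (3 / 4 * √π)) := by
  have h_main := tendsto_intervalIntegral_of_dominated_of_tendsto_atBot_atTop
    (F := fun t s => t * (s * (rescaledDensity t s - exp (-s ^ 2)))) (μ := volume)
    tendsto_neg_atTop_atBot (tendsto_rescaledUpper hβ)
    (Eventually.of_forall fun t => by unfold rescaledDensity; fun_prop)
    ((eventually_ge_atTop 1).mono fun t ht s hs =>
      abs_mul_rescaledDensity_sub_le ht (by linarith [hs.1]))
    (integrable_one_add_pow_four_mul_exp_one_sub_abs.const_mul 2)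
    (Eventually.of_forall tendsto_mul_mul_rescaledDensity_sub)
  have h := (h_main.add ((tendsto_mul_exp_neg_sq_sub (eventually_le_rescaledUpper hβ)).div_const 2))
  rw [integral_pow_four_mul_exp_neg_sq, zero_div, add_zero] at h
  refine h.congr' ((eventually_ge_atTop 0).mono fun t ht => ?_)
  have hint := intervalIntegrable_rescaledDensity ht (neg_le_rescaledUpper hβ ht)
  have h_split : ∫ s in -t..rescaledUpper β t, s * (rescaledDensity t s - exp (-s ^ 2))
      = rescaledMoment β t - ∫ s in -t..rescaledUpper β t, s * exp (-s ^ 2) := by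
    rw [rescaledMoment, ← intervalIntegral.integral_sub
      (hint.continuousOn_mul (g := fun s => s) continuousOn_id)
      ((by fun_prop : Continuous fun s : ℝ => s * exp (-s ^ 2)).intervalIntegrable _ _)]
    simp only [mul_sub]
  rw [intervalIntegral.integral_const_mul, h_split, integral_mul_exp_neg_sq, neg_sq]
  ring

end Rescaled

theorem mul_mpart_sub_sqrt_eq {β l : ℝ} (hβ : 0 < β) (hl : 0 < l)
    (hmass : rescaledMass β √√(β * l) ≠ 0) :
    l * (mpart β l - √(β / l))
      = √√(β * l) * rescaledMoment β √√(β * l) / rescaledMass β √√(β * l) := by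
  set t := √√(β * l)
  have ht : 0 < t := sqrt_pos.2 (sqrt_pos.2 (by positivity))
  have h_sq : t ^ 2 = √(β * l) := sq_sqrt (sqrt_nonneg _)
  have h_l : t ^ 4 / β = l := by
    rw [show t ^ 4 = (t ^ 2) ^ 2 by ring, h_sq, sq_sqrt (by positivity)]
    field_simp
  have h_sqrt : √(β / l) = β / t ^ 2 := by
    rw [h_sq, eq_div_iff (sqrt_pos.2 (by positivity)).ne', ← sqrt_mul (by positivity),
      show β / l * (β * l) = β ^ 2 by field_simp, sqrt_sq hβ.le]
  rw [h_sqrt, ← h_l]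
  exact mpart_rescale hβ ht hmass

/-- `m(λ) = √(β/λ) + 3/(4λ) + o(1/λ)` as `λ → ∞`. -/
theorem mean_asymptotic (β : ℝ) (hβ : 0 < β) :
    Tendsto (fun l : ℝ => l * (mpart β l - Real.sqrt (β / l))) atTop (nhds (3 / 4)) := by
  have hπ : √π ≠ 0 := (sqrt_pos.2 pi_pos).ne'
  have h_scale : Tendsto (fun l => √√(β * l)) atTop atTop :=
    tendsto_sqrt_atTop.comp (tendsto_sqrt_atTop.comp (tendsto_id.const_mul_atTop hβ))
  have h_ratio := ((tendsto_mul_rescaledMoment hβ).div (tendsto_rescaledMass hβ) hπ).comp h_scale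
  rw [mul_div_cancel_right₀ _ hπ] at h_ratio
  refine h_ratio.congr' ?_
  filter_upwards [eventually_gt_atTop 0,
    h_scale.eventually ((tendsto_rescaledMass hβ).eventually_ne hπ)] with l hl hmass
  exact (mul_mpart_sub_sqrt_eq hβ hl hmass).symm
end
end

section
/- Fix β > 0. The single-particle variance v(λ) satisfies (2·λ^{3/2}/√β)·v(λ) → 1 as λ → +∞; equivalently, v(λ) = (√β/(2λ^{3/2}))·(1 + o(1)) as λ → ∞. -/
open MeasureTheory Filter

noncomputable section

/-!
Laplace's method. Put `r = √β`, `u = √λ`, `q = √(r u) = (βλ)^{1/4}` and `s = r / u`, the minimiser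
of `λx + β/x`. The substitution `x = s (1 + w / q)` turns the density `e^{-λx - β/x}` into
`e^{-2q²} · e^{-w² / (1 + w / q)}` on `(-q, q (u / r - 1)]`, so `v(λ) = (s / q)² V(λ)` with
`(s / q)² = √β / λ^{3/2}`, where `V(λ)` is the variance of the rescaled density. As `λ → ∞` the
interval exhausts `ℝ` and `e^{-w² / (1 + w / q)} → e^{-w²}`, dominated by a multiple of `e^{-|w|}`
once `q ≥ 2`; so the moments converge to Gaussian moments and `V(λ) → 1/2`.
-/

open Real Set Topology
open scoped Nat

def intervalMoment (f : ℝ → ℝ) (a b : ℝ) (k : ℕ) : ℝ := ∫ x in a..b, x ^ k * f x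

def intervalVariance (f : ℝ → ℝ) (a b : ℝ) : ℝ :=
  intervalMoment f a b 2 / intervalMoment f a b 0 -
    (intervalMoment f a b 1 / intervalMoment f a b 0) ^ 2

lemma vpart_eq_intervalVariance (β l : ℝ) :
    vpart β l = intervalVariance (fun x => exp (-(l * x) - β / x)) 0 1 := by
  simp [vpart, mpart, cpart, intervalVariance, intervalMoment]

section IntervalVariance

variable {f g : ℝ → ℝ} {a b : ℝ}

lemma intervalMoment_const_mul (c : ℝ) (k : ℕ) :
    intervalMoment (fun x => c * f x) a b k = c * intervalMoment f a b k := by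
  simp only [intervalMoment, mul_left_comm _ c, intervalIntegral.integral_const_mul]

lemma intervalVariance_const_mul {c : ℝ} (hc : c ≠ 0) :
    intervalVariance (fun x => c * f x) a b = intervalVariance f a b := by
  simp only [intervalVariance, intervalMoment_const_mul, mul_div_mul_left _ _ hc]

lemma intervalVariance_congr (hab : a ≤ b) (hfg : EqOn f g (Ioc a b)) :
    intervalVariance f a b = intervalVariance g a b := by
  have hmoment (k : ℕ) : intervalMoment f a b k = intervalMoment g a b k :=
    intervalIntegral.integral_congr_ae
      (Eventually.of_forall fun x hx => by rw [hfg (uIoc_of_le hab ▸ hx)])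
  simp only [intervalVariance, hmoment]

lemma integral_quadratic_mul (hf : IntervalIntegrable f volume a b) (α₂ α₁ α₀ : ℝ) :
    ∫ x in a..b, (α₂ * x ^ 2 + α₁ * x + α₀) * f x =
      α₂ * intervalMoment f a b 2 + α₁ * intervalMoment f a b 1 + α₀ * intervalMoment f a b 0 := by
  have hint (k : ℕ) : IntervalIntegrable (fun x => x ^ k * f x) volume a b :=
    hf.continuousOn_mul (continuous_pow k).continuousOn
  have hint1 : IntervalIntegrable (fun x => x * f x) volume a b := by simpa using hint 1
  simp only [intervalMoment, pow_one, pow_zero, one_mul, add_mul, mul_assoc]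
  rw [intervalIntegral.integral_add (((hint 2).const_mul α₂).add (hint1.const_mul α₁))
      (hf.const_mul α₀),
    intervalIntegral.integral_add ((hint 2).const_mul α₂) (hint1.const_mul α₁),
    intervalIntegral.integral_const_mul, intervalIntegral.integral_const_mul,
    intervalIntegral.integral_const_mul]

lemma intervalVariance_comp_mul_add {c : ℝ} (hc : c ≠ 0) (d : ℝ)
    (hf : IntervalIntegrable f volume (c * a + d) (c * b + d)) :
    intervalVariance f (c * a + d) (c * b + d) =
      c ^ 2 * intervalVariance (fun w => f (c * w + d)) a b := by
  unfold intervalVariance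
  set M := intervalMoment f (c * a + d) (c * b + d)
  have hmoment (k : ℕ) (α₂ α₁ α₀ : ℝ) (hk : ∀ x, ((x - d) / c) ^ k = α₂ * x ^ 2 + α₁ * x + α₀) :
      intervalMoment (fun w => f (c * w + d)) a b k = c⁻¹ * (α₂ * M 2 + α₁ * M 1 + α₀ * M 0) := by
    rw [← integral_quadratic_mul hf, ← smul_eq_mul]
    simp only [← hk, ← intervalIntegral.integral_comp_mul_add _ hc d, intervalMoment,
      add_sub_cancel_right, mul_div_cancel_left₀ _ hc]
  rw [hmoment 0 0 0 1 (by simp),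
    hmoment 1 0 c⁻¹ (-d / c) (fun x => by ring),
    hmoment 2 (c⁻¹ ^ 2) (-2 * d / c ^ 2) (d ^ 2 / c ^ 2) (fun x => by ring)]
  simp only [zero_mul, zero_add, one_mul]
  rcases eq_or_ne (M 0) 0 with h0 | h0
  · simp [h0]
  · field_simp
    ring

end IntervalVariance

lemma intervalIntegrable_exp_neg_mul_sub_div {β : ℝ} (hβ : 0 ≤ β) (l : ℝ) {a b : ℝ}
    (ha : 0 ≤ a) (hb : 0 ≤ b) :
    IntervalIntegrable (fun x => exp (-(l * x) - β / x)) volume a b := by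
  refine ((by fun_prop : Continuous fun x => exp (-(l * x))).intervalIntegrable a b).mono_fun'
    (by fun_prop) ?_
  filter_upwards [ae_restrict_mem measurableSet_uIoc] with x hx
  have hx0 : 0 < x := (le_min ha hb).trans_lt hx.1
  rw [norm_of_nonneg (exp_pos _).le]
  exact exp_le_exp.2 (by linarith [div_nonneg hβ hx0.le])

def laplaceWeight (q w : ℝ) : ℝ := exp (-(w ^ 2 / (1 + w / q)))

section LaplaceRescaling

variable {β l q s : ℝ}

lemma neg_mul_sub_div_rescale (hq : 0 < q) (hs : 0 < s) (hl : l * s = q ^ 2)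
    (hβ : β = q ^ 2 * s) {w : ℝ} (hw : -q < w) :
    -(l * (s / q * w + s)) - β / (s / q * w + s) = -(2 * q ^ 2) - w ^ 2 / (1 + w / q) := by
  have hl' : l = q ^ 2 / s := eq_div_of_mul_eq hs.ne' hl
  have hqw : w + q ≠ 0 := by linarith
  have hx : s / q * w + s = s * (w + q) / q := by field_simp
  have ht : 1 + w / q = (w + q) / q := by field_simp; ring
  subst hl' hβ
  rw [hx, ht]
  field_simp
  ring

lemma vpart_eq_mul_intervalVariance_laplaceWeight (hq : 0 < q) (hs : 0 < s)
    (hl : l * s = q ^ 2) (hβ : β = q ^ 2 * s) {b : ℝ} (hb : s / q * b + s = 1) :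
    vpart β l = (s / q) ^ 2 * intervalVariance (laplaceWeight q) (-q) b := by
  have hσ : 0 < s / q := div_pos hs hq
  have h0 : s / q * -q + s = 0 := by field_simp; ring
  have hqb : -q ≤ b := by nlinarith
  have hint := intervalIntegrable_exp_neg_mul_sub_div (β := β) (by rw [hβ]; positivity) l
    le_rfl zero_le_one
  rw [← h0, ← hb] at hint
  have hrescale := intervalVariance_comp_mul_add hσ.ne' s hint
  rw [h0, hb] at hrescale
  rw [vpart_eq_intervalVariance, hrescale,
    intervalVariance_congr hqb (g := fun w => exp (-(2 * q ^ 2)) * laplaceWeight q w)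
      (fun w hw => by
        rw [neg_mul_sub_div_rescale hq hs hl hβ hw.1, sub_eq_add_neg, exp_add]
        rfl),
    intervalVariance_const_mul (exp_pos _).ne']

end LaplaceRescaling

section LaplaceWeight

variable {q w : ℝ}

lemma laplaceWeight_nonneg (q w : ℝ) : 0 ≤ laplaceWeight q w := (exp_pos _).le

lemma laplaceWeight_le_exp (hq : 2 ≤ q) (hw : -q < w) :
    laplaceWeight q w ≤ exp (4 - 2 * |w|) := by
  have hq0 : 0 < q := by linarith
  have ht : 0 < 1 + w / q := by
    have : -1 < w / q := by rwa [lt_div_iff₀ hq0, neg_one_mul]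
    linarith
  have hwq : w / q ≤ |w| / 2 :=
    (div_le_div_of_nonneg_right (le_abs_self w) hq0.le).trans
      (div_le_div_of_nonneg_left (abs_nonneg w) two_pos hq)
  have hsq : 4 * |w| - 4 * (1 + w / q) ≤ w ^ 2 / (1 + w / q) := by
    rw [le_div_iff₀ ht]
    nlinarith [sq_nonneg (|w| - 2 * (1 + w / q)), sq_abs w]
  rw [laplaceWeight, exp_le_exp]
  linarith

lemma abs_pow_mul_laplaceWeight_le (k : ℕ) (hq : 2 ≤ q) (hw : -q < w) :
    |w| ^ k * laplaceWeight q w ≤ k ! * exp 4 * exp (-|w|) := by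
  have hpow : |w| ^ k ≤ k ! * exp |w| := by
    have := pow_div_factorial_le_exp |w| (abs_nonneg w) k
    rwa [div_le_iff₀ (by positivity), mul_comm] at this
  calc |w| ^ k * laplaceWeight q w ≤ (k ! * exp |w|) * exp (4 - 2 * |w|) :=
        mul_le_mul hpow (laplaceWeight_le_exp hq hw) (laplaceWeight_nonneg q w) (by positivity)
    _ = k ! * exp 4 * exp (-|w|) := by
        rw [mul_assoc, ← exp_add, mul_assoc, ← exp_add]
        ring_nf

lemma tendsto_laplaceWeight (w : ℝ) :
    Tendsto (fun q => laplaceWeight q w) atTop (𝓝 (exp (-w ^ 2))) := by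
  have ht : Tendsto (fun q => 1 + w / q) atTop (𝓝 1) := by
    simpa using tendsto_const_nhds.add ((tendsto_const_nhds (x := w)).div_atTop tendsto_id)
  have := ((tendsto_const_nhds (x := w ^ 2)).div ht one_ne_zero).neg.rexp
  rw [div_one] at this
  exact this

end LaplaceWeight

lemma integrable_exp_neg_abs : Integrable fun x : ℝ => exp (-|x|) :=
  .of_integral_ne_zero <| by
    rw [integral_comp_abs (f := fun x => exp (-x)), integral_exp_neg_Ioi_zero]
    norm_num

lemma tendsto_intervalMoment_laplaceWeight {ι : Type*} {L : Filter ι} [L.IsCountablyGenerated]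
    {q b : ι → ℝ} (hq : Tendsto q L atTop) (hb : Tendsto b L atTop) (k : ℕ) :
    Tendsto (fun i => intervalMoment (laplaceWeight (q i)) (-q i) (b i) k) L
      (𝓝 (∫ w, w ^ k * exp (-w ^ 2))) := by
  have hmem (w : ℝ) : ∀ᶠ i in L, w ∈ Ioc (-q i) (b i) := by
    filter_upwards [hq.eventually_gt_atTop (-w), hb.eventually_ge_atTop w] with i hqi hbi
    exact ⟨by linarith, hbi⟩
  have hmeas (i : ι) : Measurable fun w => w ^ k * laplaceWeight (q i) w := by
    unfold laplaceWeight; fun_prop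
  have hdct := tendsto_integral_filter_of_dominated_convergence (μ := volume)
    (F := fun i => (Ioc (-q i) (b i)).indicator fun w => w ^ k * laplaceWeight (q i) w)
    (fun w => k ! * exp 4 * exp (-|w|))
    (Eventually.of_forall fun i => ((hmeas i).indicator measurableSet_Ioc).aestronglyMeasurable)
    (by
      filter_upwards [hq.eventually_ge_atTop 2] with i hq2
      refine Eventually.of_forall fun w => ?_
      by_cases hw : w ∈ Ioc (-q i) (b i)
      · rw [indicator_of_mem hw, norm_mul, norm_pow, norm_eq_abs,
          norm_of_nonneg (laplaceWeight_nonneg _ _)]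
        exact abs_pow_mul_laplaceWeight_le k hq2 hw.1
      · rw [indicator_of_notMem hw, norm_zero]
        positivity)
    (integrable_exp_neg_abs.const_mul _)
    (Eventually.of_forall fun w =>
      (((tendsto_laplaceWeight w).comp hq).const_mul (w ^ k)).congr' <| by
        filter_upwards [hmem w] with i hi
        rw [indicator_of_mem hi]
        rfl)
  refine hdct.congr' ?_
  filter_upwards [hq.eventually_ge_atTop 0, hb.eventually_ge_atTop 0] with i hq0 hb0
  rw [integral_indicator measurableSet_Ioc, intervalMoment,
    intervalIntegral.integral_of_le (by linarith)]

lemma integral_exp_neg_sq : ∫ w : ℝ, exp (-w ^ 2) = √π := by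
  simpa using integral_gaussian 1

lemma integral_mul_exp_neg_sq_s13 : ∫ w : ℝ, w * exp (-w ^ 2) = 0 := by
  have hodd := integral_neg_eq_self (fun w : ℝ => w * exp (-w ^ 2)) volume
  simp only [neg_mul, neg_sq, integral_neg] at hodd
  linarith

lemma integral_sq_mul_exp_neg_sq : ∫ w : ℝ, w ^ 2 * exp (-w ^ 2) = √π / 2 := by
  have hGamma : ∫ x in Ioi (0 : ℝ), x ^ 2 * exp (-x ^ 2) = 1 / 2 * Gamma (1 + 1 / 2) := by
    have h := integral_rpow_mul_exp_neg_rpow (p := 2) (q := 2) two_pos (by norm_num)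
    norm_num [rpow_two] at h ⊢
    exact h
  have hsymm := integral_comp_abs (f := fun x => x ^ 2 * exp (-x ^ 2))
  simp only [sq_abs] at hsymm
  have h32 : Gamma (1 + 1 / 2) = √π / 2 := by simpa using Gamma_nat_add_half 1
  rw [hsymm, hGamma, h32]
  ring

lemma tendsto_intervalVariance_laplaceWeight {ι : Type*} {L : Filter ι}
    [L.IsCountablyGenerated] {q b : ι → ℝ} (hq : Tendsto q L atTop) (hb : Tendsto b L atTop) :
    Tendsto (fun i => intervalVariance (laplaceWeight (q i)) (-q i) (b i)) L (𝓝 (1 / 2)) := by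
  have h0 := tendsto_intervalMoment_laplaceWeight hq hb 0
  have h1 := tendsto_intervalMoment_laplaceWeight hq hb 1
  have h2 := tendsto_intervalMoment_laplaceWeight hq hb 2
  simp only [pow_zero, one_mul, pow_one, integral_exp_neg_sq, integral_mul_exp_neg_sq_s13,
    integral_sq_mul_exp_neg_sq] at h0 h1 h2
  have hπ : √π ≠ 0 := (sqrt_pos.2 pi_pos).ne'
  have hvar := (h2.div h0 hπ).sub ((h1.div h0 hπ).pow 2)
  rwa [show √π / 2 / √π - (0 / √π) ^ 2 = 1 / 2 by field_simp; ring] at hvar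

lemma scaled_vpart_eq {β l : ℝ} (hβ : 0 < β) (hl : 0 < l) :
    2 * l ^ ((3 : ℝ) / 2) / √β * vpart β l =
      2 * intervalVariance (laplaceWeight √(√β * √l)) (-√(√β * √l))
        (√(√β * √l) * (√l / √β - 1)) := by
  set r := √β
  set u := √l
  set q := √(r * u)
  have hr : 0 < r := sqrt_pos.2 hβ
  have hu : 0 < u := sqrt_pos.2 hl
  have hq : 0 < q := sqrt_pos.2 (by positivity)
  have hq2 : q ^ 2 = r * u := sq_sqrt (by positivity)
  have hl32 : l ^ ((3 : ℝ) / 2) = u ^ 3 := by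
    rw [show u = l ^ (1 / 2 : ℝ) from sqrt_eq_rpow l, ← rpow_natCast, ← rpow_mul hl.le]
    norm_num
  rw [vpart_eq_mul_intervalVariance_laplaceWeight (s := r / u) (b := q * (u / r - 1)) hq
    (div_pos hr hu) (by rw [hq2]; field_simp; exact (sq_sqrt hl.le).symm)
    (by rw [hq2]; field_simp; exact (sq_sqrt hβ.le).symm)
    (by field_simp; ring), hl32]
  field_simp
  rw [hq2]
  ring

/-- `v(λ) = (√β/(2λ^{3/2}))(1 + o(1))` as `λ → ∞`. -/
theorem var_asymptotic (β : ℝ) (hβ : 0 < β) :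
    Tendsto (fun l : ℝ => 2 * l ^ ((3:ℝ)/2) / Real.sqrt β * vpart β l) atTop (nhds 1) := by
  have hq : Tendsto (fun l => √(√β * √l)) atTop atTop :=
    tendsto_sqrt_atTop.comp (tendsto_sqrt_atTop.const_mul_atTop (sqrt_pos.2 hβ))
  have hb : Tendsto (fun l => √(√β * √l) * (√l / √β - 1)) atTop atTop :=
    hq.atTop_mul_atTop₀ <| tendsto_atTop_add_const_right _ (-1) <|
      tendsto_sqrt_atTop.atTop_div_const (sqrt_pos.2 hβ)
  have hV := (tendsto_intervalVariance_laplaceWeight hq hb).const_mul 2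
  rw [mul_one_div_cancel two_ne_zero] at hV
  refine hV.congr' ?_
  filter_upwards [eventually_gt_atTop 0] with l hl
  exact (scaled_vpart_eq hβ hl).symm
end
end
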